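/- For κ = 1, the infimum over α ∈ (0,∞) of g_1(α) = 1 - exp(-(Γ(1/α + 1))^α) equals the limit as α → +∞, namely 1 - exp(-e^{-γ}), where γ is Euler's constant. -/

import Mathlib

/-!
Since `log ∘ Γ` is convex with `log Γ(1) = 0` and derivative `-γ` at `1`, the secant slope
`log Γ(1 + t) / t` is at least `-γ` and tends to `-γ` as `t → 0⁺`. Writing
`Γ(1/α + 1)^α = exp (log Γ(1 + t) / t)` with `t = 1/α`, the function of the theorem is the
increasing function `s ↦ 1 - exp (-exp s)` of this slope, so it is bounded below by its value
at `-γ`, and that value is attained in the limit `α → ∞`.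
-/

open Real Filter Set Topology

lemma hasDerivAt_log_Gamma_one :
    HasDerivAt (fun x => log (Gamma x)) (-eulerMascheroniConstant) 1 := by
  simpa [Gamma_one] using hasDerivAt_Gamma_one.log (by simp [Gamma_one])

lemma neg_eulerMascheroniConstant_le_log_Gamma_one_add_div {t : ℝ} (ht : 0 < t) :
    -eulerMascheroniConstant ≤ log (Gamma (1 + t)) / t := by
  have h := convexOn_log_Gamma.le_slope_of_hasDerivAt (mem_Ioi.2 one_pos)
    (mem_Ioi.2 (by linarith : (0 : ℝ) < 1 + t)) (by linarith) hasDerivAt_log_Gamma_one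
  simpa [slope_def_field, Gamma_one] using h

lemma tendsto_log_Gamma_one_add_div_nhdsGT_zero :
    Tendsto (fun t => log (Gamma (1 + t)) / t) (𝓝[>] 0) (𝓝 (-eulerMascheroniConstant)) := by
  simpa [Gamma_one, div_eq_inv_mul] using hasDerivAt_log_Gamma_one.tendsto_slope_zero_right

lemma Gamma_one_div_add_one_rpow {α : ℝ} (hα : 0 < α) :
    Gamma (1 / α + 1) ^ α = exp (log (Gamma (1 + 1 / α)) / (1 / α)) := by
  rw [rpow_def_of_pos (Gamma_pos_of_pos (by positivity)), add_comm, div_div_eq_mul_div,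
    div_one, mul_comm]

lemma monotone_one_sub_exp_neg_exp : Monotone fun s : ℝ => 1 - exp (-exp s) :=
  fun _ _ h => sub_le_sub_left (exp_le_exp.2 (neg_le_neg (exp_le_exp.2 h))) 1

theorem g_one_inf (γ : ℝ) (hγ : γ = Real.eulerMascheroniConstant) :
    IsGLB ((fun α => 1 - Real.exp (-(Real.Gamma (1 / α + 1)) ^ α)) '' Set.Ioi 0)
      (1 - Real.exp (-Real.exp (-γ))) ∧
    Tendsto (fun α => 1 - Real.exp (-(Real.Gamma (1 / α + 1)) ^ α)) atTop
      (nhds (1 - Real.exp (-Real.exp (-γ)))) := by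
  subst hγ
  have hlim : Tendsto (fun α => 1 - exp (-(Gamma (1 / α + 1)) ^ α)) atTop
      (𝓝 (1 - exp (-exp (-eulerMascheroniConstant)))) := by
    have hslope := tendsto_log_Gamma_one_add_div_nhdsGT_zero.comp tendsto_inv_atTop_nhdsGT_zero
    have hcont : Continuous fun s => 1 - exp (-exp s) := by fun_prop
    refine ((hcont.tendsto _).comp hslope).congr' ?_
    filter_upwards [eventually_gt_atTop 0] with α hα
    rw [Gamma_one_div_add_one_rpow hα, one_div]
    rfl
  refine ⟨isGLB_of_mem_closure ?_ (mem_closure_of_tendsto hlim ?_), hlim⟩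
  · rintro _ ⟨α, hα, rfl⟩
    simp only [Gamma_one_div_add_one_rpow (mem_Ioi.1 hα)]
    exact monotone_one_sub_exp_neg_exp
      (neg_eulerMascheroniConstant_le_log_Gamma_one_add_div (one_div_pos.2 hα))
  · filter_upwards [eventually_gt_atTop 0] with α hα using mem_image_of_mem _ hα
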